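/- For all finite sets u, v, w of bimodal formulas: if w ∈ CCS(u ∪ v), then there exist v₁ ∈ CCS(u) and v₂ ∈ CCS(v) such that v₁ ∪ v₂ = w. -/
import Mathlib


/-- Formulas of bimodal modal logic. -/
inductive BFormula : Type
  | atom : ℕ → BFormula
  | falsum : BFormula
  | neg : BFormula → BFormula
  | and : BFormula → BFormula → BFormula
  | boxa : BFormula → BFormula
  | boxb : BFormula → BFormula
deriving DecidableEq

/-- `CSF(w)`: the least set of formulas containing `w` and closed under the classical
decomposition rules. -/
inductive CSF (w : Set BFormula) : BFormula → Prop
  | base {φ} : φ ∈ w → CSF w φ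
  | andl {φ ψ} : CSF w (.and φ ψ) → CSF w φ
  | andr {φ ψ} : CSF w (.and φ ψ) → CSF w ψ
  | negandl {φ ψ} : CSF w (.neg (.and φ ψ)) → CSF w (.neg φ)
  | negandr {φ ψ} : CSF w (.neg (.and φ ψ)) → CSF w (.neg ψ)
  | negE {φ} : CSF w (.neg φ) → CSF w φ

/-- `w ∈ CCS(u)`: `w` is a consistent classical saturation of `u`, i.e. a finite set
with `u ⊆ w ⊆ CSF(u)`, closed under the classical saturation rules, not containing
`⊥`, and not containing both a formula and its negation. -/
def CCS (u w : Set BFormula) : Prop :=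
  w.Finite ∧ u ⊆ w ∧ (∀ φ ∈ w, CSF u φ) ∧
  (∀ φ ψ : BFormula, BFormula.and φ ψ ∈ w → φ ∈ w ∧ ψ ∈ w) ∧
  (∀ φ ψ : BFormula, BFormula.neg (.and φ ψ) ∈ w →
    BFormula.neg φ ∈ w ∨ BFormula.neg ψ ∈ w) ∧
  (∀ φ : BFormula, BFormula.neg (.neg φ) ∈ w → φ ∈ w) ∧
  BFormula.falsum ∉ w ∧
  (∀ φ : BFormula, BFormula.neg φ ∈ w → φ ∉ w)


lemma csf_union_split {u v : Set BFormula} {φ : BFormula}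
    (h : CSF (u ∪ v) φ) : CSF u φ ∨ CSF v φ := by
  induction h with
  | base hφ =>
    rcases hφ with h | h
    · exact Or.inl (CSF.base h)
    · exact Or.inr (CSF.base h)
  | andl _ ih => exact ih.imp CSF.andl CSF.andl
  | andr _ ih => exact ih.imp CSF.andr CSF.andr
  | negandl _ ih => exact ih.imp CSF.negandl CSF.negandl
  | negandr _ ih => exact ih.imp CSF.negandr CSF.negandr
  | negE _ ih => exact ih.imp CSF.negE CSF.negE

lemma ccs_restrict {a b w : Set BFormula} (h : CCS (a ∪ b) w) :
    CCS a {φ ∈ w | CSF a φ} := by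
  obtain ⟨hfin, hsub, hcsf, hand, hnand, hnn, hfal, hcon⟩ := h
  refine ⟨hfin.subset (Set.sep_subset _ _), ?_, fun φ hφ => hφ.2, ?_, ?_, ?_, ?_, ?_⟩
  · intro φ hφ; exact ⟨hsub (Or.inl hφ), CSF.base hφ⟩
  · rintro φ ψ ⟨hw, hc⟩
    obtain ⟨h1, h2⟩ := hand φ ψ hw
    exact ⟨⟨h1, hc.andl⟩, ⟨h2, hc.andr⟩⟩
  · rintro φ ψ ⟨hw, hc⟩
    rcases hnand φ ψ hw with h | h
    · exact Or.inl ⟨h, hc.negandl⟩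
    · exact Or.inr ⟨h, hc.negandr⟩
  · rintro φ ⟨hw, hc⟩
    exact ⟨hnn φ hw, hc.negE.negE⟩
  · intro hf; exact hfal hf.1
  · rintro φ ⟨hw, _⟩ ⟨hw', _⟩; exact hcon φ hw hw'

/-- If `w ∈ CCS(u ∪ v)`, then there are `v₁ ∈ CCS(u)` and `v₂ ∈ CCS(v)` with
`v₁ ∪ v₂ = w`. -/
theorem stmt15 (u v w : Set BFormula)
    (hu : u.Finite) (hv : v.Finite) (hw : w.Finite)
    (h : CCS (u ∪ v) w) :
    ∃ v₁ v₂ : Set BFormula, CCS u v₁ ∧ CCS v v₂ ∧ v₁ ∪ v₂ = w := by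
  refine ⟨{φ ∈ w | CSF u φ}, {φ ∈ w | CSF v φ}, ccs_restrict h, ccs_restrict (by rwa [Set.union_comm] at h), ?_⟩
  ext φ
  constructor
  · rintro (⟨hw, _⟩ | ⟨hw, _⟩) <;> exact hw
  · intro hw
    rcases csf_union_split (h.2.2.1 φ hw) with hc | hc
    · exact Or.inl ⟨hw, hc⟩
    · exact Or.inr ⟨hw, hc⟩
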